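/- Let F ∈ ℂ[z₀, z₁, z₂, z₃] be the homogeneous polynomial of degree 9 given by F = z₂⁹ − 5z₀z₂⁷z₃ + 2z₁z₂⁷z₃ + 4z₂⁸z₃ + 6z₀²z₂⁵z₃² − 5z₀z₁z₂⁵z₃² + z₁²z₂⁵z₃² − 11z₀z₂⁶z₃² + 6z₁z₂⁶z₃² + 6z₂⁷z₃² + z₀³z₂³z₃³ + 9z₀²z₂⁴z₃³ − 11z₀z₁z₂⁴z₃³ + 3z₁²z₂⁴z₃³ − 7z₀z₂⁵z₃³ + 6z₁z₂⁵z₃³ + 2z₂⁶z₃³ + 3z₀²z₂³z₃⁴ − 7z₀z₁z₂³z₃⁴ + 3z₁²z₂³z₃⁴ + 4z₀z₂⁴z₃⁴ − 5z₂⁵z₃⁴ − z₀z₁z₂²z₃⁵ + z₁²z₂²z₃⁵ + 11z₀z₂³z₃⁵ − 6z₁z₂³z₃⁵ − 5z₂⁴z₃⁵ + 7z₀z₂²z₃⁶ − 6z₁z₂²z₃⁶ + 2z₂³z₃⁶ + z₀z₂z₃⁷ − 2z₁z₂z₃⁷ + 6z₂²z₃⁷ + 4z₂z₃⁸ + z₃⁹.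 Then a point p = (p₀, p₁, p₂, p₃) ∈ ℂ⁴ satisfies F(p) = 0 and ∂F/∂z₀(p) = ∂F/∂z₁(p) = ∂F/∂z₂(p) = ∂F/∂z₃(p) = 0 if and only if (p₂ = 0 and p₃ = 0) or (p₀ = 0 and p₂ + p₃ = 0). In other words, the singular locus of the degree-9 surface {F = 0} ⊂ ℙ³(ℂ) is exactly the union of the two lines {z₂ = z₃ = 0} and {z₀ = 0, z₂ + z₃ = 0}. -/

import Mathlib

open MvPolynomial

set_option maxHeartbeats 1000000

/-- The degree-9 homogeneous polynomial `F ∈ ℂ[z₀,z₁,z₂,z₃]` defining the image of the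
tricanonical map, with `X 0 = z₀`, `X 1 = z₁`, `X 2 = z₂`, `X 3 = z₃`. -/
noncomputable def tricanF : MvPolynomial (Fin 4) ℂ :=
  (X 2) ^ 9
  - 5 * (X 0 * (X 2) ^ 7 * X 3) + 2 * (X 1 * (X 2) ^ 7 * X 3) + 4 * ((X 2) ^ 8 * X 3)
  + 6 * ((X 0) ^ 2 * (X 2) ^ 5 * (X 3) ^ 2) - 5 * (X 0 * X 1 * (X 2) ^ 5 * (X 3) ^ 2)
  + (X 1) ^ 2 * (X 2) ^ 5 * (X 3) ^ 2 - 11 * (X 0 * (X 2) ^ 6 * (X 3) ^ 2)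
  + 6 * (X 1 * (X 2) ^ 6 * (X 3) ^ 2) + 6 * ((X 2) ^ 7 * (X 3) ^ 2)
  + (X 0) ^ 3 * (X 2) ^ 3 * (X 3) ^ 3 + 9 * ((X 0) ^ 2 * (X 2) ^ 4 * (X 3) ^ 3)
  - 11 * (X 0 * X 1 * (X 2) ^ 4 * (X 3) ^ 3) + 3 * ((X 1) ^ 2 * (X 2) ^ 4 * (X 3) ^ 3)
  - 7 * (X 0 * (X 2) ^ 5 * (X 3) ^ 3) + 6 * (X 1 * (X 2) ^ 5 * (X 3) ^ 3)
  + 2 * ((X 2) ^ 6 * (X 3) ^ 3)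
  + 3 * ((X 0) ^ 2 * (X 2) ^ 3 * (X 3) ^ 4) - 7 * (X 0 * X 1 * (X 2) ^ 3 * (X 3) ^ 4)
  + 3 * ((X 1) ^ 2 * (X 2) ^ 3 * (X 3) ^ 4) + 4 * (X 0 * (X 2) ^ 4 * (X 3) ^ 4)
  - 5 * ((X 2) ^ 5 * (X 3) ^ 4)
  - X 0 * X 1 * (X 2) ^ 2 * (X 3) ^ 5 + (X 1) ^ 2 * (X 2) ^ 2 * (X 3) ^ 5
  + 11 * (X 0 * (X 2) ^ 3 * (X 3) ^ 5) - 6 * (X 1 * (X 2) ^ 3 * (X 3) ^ 5)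
  - 5 * ((X 2) ^ 4 * (X 3) ^ 5)
  + 7 * (X 0 * (X 2) ^ 2 * (X 3) ^ 6) - 6 * (X 1 * (X 2) ^ 2 * (X 3) ^ 6)
  + 2 * ((X 2) ^ 3 * (X 3) ^ 6)
  + X 0 * X 2 * (X 3) ^ 7 - 2 * (X 1 * X 2 * (X 3) ^ 7) + 6 * ((X 2) ^ 2 * (X 3) ^ 7)
  + 4 * (X 2 * (X 3) ^ 8) + (X 3) ^ 9

/-!
Completing the square in `z₁` gives `4F = (z₂ + z₃) Q² - z₂ z₃ Δ`, where `Q` is linear in `z₁` and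
`Δ` does not involve `z₁`. The polynomials vanishing to second order at a point form an ideal, and
on each of the two lines every summand on the right visibly lies in it.

Conversely, let `p` be a singular point. If `z₂ z₃ (z₂ + z₃) ≠ 0` at `p`, then
`∂F/∂z₁ = z₂ z₃ (z₂ + z₃)² Q` forces `Q(p) = 0`, so `Δ` is singular at `p`. In terms of
`t = z₀ z₂ z₃`, `w = (z₂ - z₃)²` and `q = z₂ z₃` the critical equations of `Δ` become a cubic and a
quadratic relation between `w` and `q` whose only common solutions have `q = 0`, a contradiction.
On `z₂ z₃ (z₂ + z₃) = 0` the polynomial `F` restricts to `z₃⁹`, `z₂⁹` or `-z₀³ z₂⁶`.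
-/

namespace MvPolynomial

variable {σ R : Type*} [CommSemiring R]

@[simp]
theorem pderiv_ofNat (i : σ) (n : ℕ) [n.AtLeastTwo] :
    pderiv i (no_index (OfNat.ofNat n) : MvPolynomial σ R) = 0 :=
  (pderiv i).map_natCast n

def vanishingToSecondOrder (p : σ → R) : Ideal (MvPolynomial σ R) where
  carrier := {f | eval p f = 0 ∧ ∀ i, eval p (pderiv i f) = 0}
  add_mem' := by
    rintro f g ⟨hf, hf'⟩ ⟨hg, hg'⟩
    exact ⟨by simp [hf, hg], fun i => by simp [hf' i, hg' i]⟩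
  zero_mem' := by simp
  smul_mem' := by
    rintro c f ⟨hf, hf'⟩
    exact ⟨by simp [hf], fun i => by simp [hf, hf' i]⟩

variable {p : σ → R}

theorem mem_vanishingToSecondOrder {f : MvPolynomial σ R} :
    f ∈ vanishingToSecondOrder p ↔ eval p f = 0 ∧ ∀ i, eval p (pderiv i f) = 0 :=
  Iff.rfl

theorem mul_mem_vanishingToSecondOrder {f g : MvPolynomial σ R}
    (hf : eval p f = 0) (hg : eval p g = 0) : f * g ∈ vanishingToSecondOrder p :=
  ⟨by simp [hf], fun i => by simp [hf, hg]⟩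

theorem mem_vanishingToSecondOrder_of_mul_mem [NoZeroDivisors R] {m f : MvPolynomial σ R}
    (hm : eval p m ≠ 0) (h : m * f ∈ vanishingToSecondOrder p) :
    f ∈ vanishingToSecondOrder p := by
  obtain ⟨h, h'⟩ := h
  have hf : eval p f = 0 := by simpa [hm] using h
  exact ⟨hf, fun i => by simpa [hf, hm] using h' i⟩

end MvPolynomial

section

variable {K : Type*} [Field K] [CharZero K]

theorem eq_zero_of_cube_eq_of_sq_eq {w q : K}
    (h₁ : w ^ 3 = 432 * q * (w ^ 2 + 4 * w * q + 2 * q ^ 2)) (h₂ : 37 * w ^ 2 = 360 * q ^ 2) :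
    q = 0 := by
  have h₃ : q ^ 2 * (883 * w + 2604 * q) = 0 := by
    linear_combination (-1 / 72 : K) * (37 * h₁ - (w - 432 * q) * h₂)
  have h₄ : q ^ 4 = 0 := by
    linear_combination (37 / 29797848 : K) * (883 * w - 2604 * q) * h₃
      - (883 ^ 2 / 29797848 : K) * q ^ 2 * h₂
  exact eq_zero_of_pow_eq_zero h₄

theorem mul_mul_add_eq_zero_of_critical_relations {t a b : K}
    (hr : (a - b) ^ 2 * (a + b) = 6 * t)
    (h₁ : t ^ 3 = 2 * (a * b) * (a + b) ^ 3 * (a ^ 4 + b ^ 4))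
    (h₂ : (a - b) * (t ^ 2 - (a + b) ^ 2 * (10 * (a * b) ^ 2 - (a - b) ^ 4)) = 0) :
    a * b * (a + b) = 0 := by
  by_contra hne
  have hq : a * b ≠ 0 := left_ne_zero_of_mul hne
  have hs : a + b ≠ 0 := right_ne_zero_of_mul hne
  rcases eq_or_ne a b with rfl | hab
  · have ht : t = 0 := by linear_combination -hr / 6
    have : a ^ 9 = 0 := by linear_combination (-1 / 32 : K) * h₁ + (1 / 32 : K) * t ^ 2 * ht
    exact hq (by simp [eq_zero_of_pow_eq_zero this])
  · have hw : 37 * ((a - b) ^ 2) ^ 2 = 360 * (a * b) ^ 2 := by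
      refine mul_left_cancel₀ (pow_ne_zero 2 hs) ?_
      have := (mul_eq_zero.mp h₂).resolve_left (sub_ne_zero.mpr hab)
      linear_combination 36 * this + ((a - b) ^ 2 * (a + b) + 6 * t) * hr
    have hg : ((a - b) ^ 2) ^ 3 = 432 * (a * b) *
        (((a - b) ^ 2) ^ 2 + 4 * (a - b) ^ 2 * (a * b) + 2 * (a * b) ^ 2) := by
      refine mul_left_cancel₀ (pow_ne_zero 3 hs) ?_
      linear_combination 216 * h₁ +
        (((a - b) ^ 2 * (a + b)) ^ 2 + (a - b) ^ 2 * (a + b) * 6 * t + 36 * t ^ 2) * hr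
    exact hq (eq_zero_of_cube_eq_of_sq_eq hg hw)

end

noncomputable def tricanQ : MvPolynomial (Fin 4) ℂ :=
  2 * X 2 * X 3 * (X 2 + X 3) * X 1 + 2 * (X 2 ^ 3 - X 3 ^ 3) * (X 2 + X 3)
    - X 0 * X 2 * X 3 * (5 * X 2 + X 3)

noncomputable def tricanDisc : MvPolynomial (Fin 4) ℂ :=
  -4 * X 0 ^ 3 * X 2 ^ 2 * X 3 ^ 2 + X 0 ^ 2 * X 2 * X 3 * (X 2 - X 3) ^ 2 * (X 2 + X 3)
    - 4 * (X 2 + X 3) ^ 3 * (X 2 ^ 4 + X 3 ^ 4)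

theorem four_mul_tricanF :
    4 * tricanF = (X 2 + X 3) * tricanQ ^ 2 - X 2 * X 3 * tricanDisc := by
  unfold tricanF tricanQ tricanDisc
  ring

theorem pderiv_one_tricanF :
    pderiv 1 tricanF = X 2 * X 3 * (X 2 + X 3) ^ 2 * tricanQ := by
  have h := congrArg (pderiv 1) four_mul_tricanF
  simp only [Fin.isValue, Derivation.leibniz, smul_eq_mul, pderiv_ofNat, mul_zero, add_zero,
    tricanQ, tricanDisc, neg_mul, map_sub, Derivation.leibniz_pow, Nat.add_one_sub_one, pow_one,
    map_add, pderiv_X, Pi.single_eq_same, mul_one, ne_eq, Fin.reduceEq, not_false_eq_true,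
    Pi.single_eq_of_ne, sub_self, zero_ne_one, sub_zero, nsmul_eq_mul, Nat.cast_ofNat,
    map_neg, neg_zero] at h
  refine mul_left_cancel₀ (by norm_num) (h.trans ?_)
  unfold tricanQ
  ring

theorem mul_mul_add_eq_zero_of_tricanDisc_mem {p : Fin 4 → ℂ}
    (h : tricanDisc ∈ vanishingToSecondOrder p) : p 2 * p 3 * (p 2 + p 3) = 0 := by
  obtain ⟨h, hd⟩ := h
  have hx := hd 0
  have ha := hd 2
  have hb := hd 3
  simp only [tricanDisc, Fin.isValue, neg_mul, map_sub, map_add, map_neg, map_mul, eval_ofNat,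
    map_pow, eval_X, Derivation.leibniz, Derivation.leibniz_pow, Nat.add_one_sub_one, pow_one,
    pderiv_X, ne_eq, Fin.reduceEq, not_false_eq_true, Pi.single_eq_of_ne, smul_eq_mul, mul_zero,
    Pi.single_eq_same, mul_one, nsmul_eq_mul, Nat.cast_ofNat, pderiv_ofNat, add_zero,
    zero_add, sub_self, sub_zero, zero_sub, mul_neg, neg_sub] at h hx ha hb
  generalize p 0 = x at *
  generalize p 2 = a at *
  generalize p 3 = b at *
  by_contra hne
  have hq : a * b ≠ 0 := left_ne_zero_of_mul hne
  have hs : a + b ≠ 0 := right_ne_zero_of_mul hne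
  have hxt : x * a * b * ((a - b) ^ 2 * (a + b) - 6 * (x * a * b)) = 0 := by
    linear_combination hx / 2
  rcases mul_eq_zero.mp hxt with ht | hr
  · have hx0 : x = 0 := (mul_eq_zero.mp (by rwa [mul_assoc] at ht)).resolve_right hq
    subst hx0
    have : a ^ 3 * (a + b) ^ 4 = 0 := by
      linear_combination (-1 / 16 : ℂ) * ((a + b) * ha - 3 * h)
    simp_all
  · have hr : (a - b) ^ 2 * (a + b) = 6 * (x * a * b) := by linear_combination hr
    have h₁ : (x * a * b) ^ 3 = 2 * (a * b) * (a + b) ^ 3 * (a ^ 4 + b ^ 4) := by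
      linear_combination (a * b * h - (x * a * b) ^ 2 * hr) / 2
    have h₂ : (a - b) * ((x * a * b) ^ 2 - (a + b) ^ 2 * (10 * (a * b) ^ 2 - (a - b) ^ 4)) = 0 := by
      have h4qs : 4 * (a * b) * (a + b) ≠ 0 := mul_ne_zero (mul_ne_zero (by norm_num) hq) hs
      refine (mul_eq_zero.mp ?_).resolve_left h4qs
      linear_combination (a * b) ^ 2 * (ha - hb) - (a - b) * (2 * h₁ - (x * a * b) ^ 2 * hr)
    exact hne (mul_mul_add_eq_zero_of_critical_relations hr h₁ h₂)

theorem tricanF_mem_vanishingToSecondOrder {p : Fin 4 → ℂ}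
    (h : (p 2 = 0 ∧ p 3 = 0) ∨ (p 0 = 0 ∧ p 2 + p 3 = 0)) :
    tricanF ∈ vanishingToSecondOrder p := by
  refine mem_vanishingToSecondOrder_of_mul_mem (m := 4) (by simp) ?_
  rw [four_mul_tricanF, sq]
  rcases h with ⟨ha, hb⟩ | ⟨hx, hs⟩
  · have hQ : eval p tricanQ = 0 := by simp [tricanQ, ha, hb]
    exact sub_mem (Ideal.mul_mem_left _ _ (mul_mem_vanishingToSecondOrder hQ hQ))
      (Ideal.mul_mem_right _ _ (mul_mem_vanishingToSecondOrder (by simp [ha]) (by simp [hb])))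
  · have hQ : eval p tricanQ = 0 := by simp [tricanQ, hx, hs]
    have hD : tricanDisc ∈ vanishingToSecondOrder p :=
      ⟨by simp [tricanDisc, hx, hs],
        fun i => by fin_cases i <;> simp [tricanDisc, pderiv_X, hx, hs]⟩
    exact sub_mem (Ideal.mul_mem_left _ _ (mul_mem_vanishingToSecondOrder hQ hQ))
      (Ideal.mul_mem_left _ _ hD)

theorem mul_mul_add_eq_zero_of_tricanF_mem {p : Fin 4 → ℂ}
    (hF : tricanF ∈ vanishingToSecondOrder p) : p 2 * p 3 * (p 2 + p 3) = 0 := by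
  by_contra hne
  have hQ : eval p tricanQ = 0 := by
    have := hF.2 1
    simp only [pderiv_one_tricanF, map_mul, map_pow, map_add, eval_X] at this
    exact (mul_eq_zero.mp this).resolve_left (by simpa [mul_assoc] using hne)
  refine hne (mul_mul_add_eq_zero_of_tricanDisc_mem (mem_vanishingToSecondOrder_of_mul_mem
    (m := X 2 * X 3) (by simpa using left_ne_zero_of_mul hne) ?_))
  rw [show X 2 * X 3 * tricanDisc = (X 2 + X 3) * (tricanQ * tricanQ) - 4 * tricanF by
    linear_combination four_mul_tricanF]
  exact sub_mem (Ideal.mul_mem_left _ _ (mul_mem_vanishingToSecondOrder hQ hQ))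
    (Ideal.mul_mem_left _ _ hF)

theorem on_lines_of_tricanF_mem {p : Fin 4 → ℂ} (hF : tricanF ∈ vanishingToSecondOrder p) :
    (p 2 = 0 ∧ p 3 = 0) ∨ (p 0 = 0 ∧ p 2 + p 3 = 0) := by
  have h4F := congrArg (eval p) four_mul_tricanF
  simp only [map_mul, map_sub, map_pow, map_add, map_ofNat, eval_X, hF.1, tricanQ, tricanDisc,
    map_neg] at h4F
  rcases mul_eq_zero.mp (mul_mul_add_eq_zero_of_tricanF_mem hF) with hab | hs
  · rcases mul_eq_zero.mp hab with ha | hb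
    · rw [ha] at h4F
      have hb : p 3 ^ 9 = 0 := by linear_combination -h4F / 4
      exact Or.inl ⟨ha, eq_zero_of_pow_eq_zero hb⟩
    · rw [hb] at h4F
      have ha : p 2 ^ 9 = 0 := by linear_combination -h4F / 4
      exact Or.inl ⟨eq_zero_of_pow_eq_zero ha, hb⟩
  · have hb : p 3 = -p 2 := by linear_combination hs
    rw [hb] at h4F
    have : p 0 ^ 3 * p 2 ^ 6 = 0 := by linear_combination h4F / 4
    rcases mul_eq_zero.mp this with hx | ha
    · exact Or.inr ⟨eq_zero_of_pow_eq_zero hx, hs⟩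
    · have ha := eq_zero_of_pow_eq_zero ha
      exact Or.inl ⟨ha, by rw [hb, ha, neg_zero]⟩

/-- A point `p ∈ ℂ⁴` is a singular point of the degree-9 surface `{F = 0}` (i.e. `F` and
all its partial derivatives vanish at `p`) if and only if `p₂ = p₃ = 0` or
`p₀ = 0 ∧ p₂ + p₃ = 0`: the singular locus is the union of the two lines
`{z₂ = z₃ = 0}` and `{z₀ = 0, z₂ + z₃ = 0}`. -/
theorem stmt_8 (p : Fin 4 → ℂ) :
    (eval p tricanF = 0 ∧ ∀ i : Fin 4, eval p (pderiv i tricanF) = 0)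
      ↔ ((p 2 = 0 ∧ p 3 = 0) ∨ (p 0 = 0 ∧ p 2 + p 3 = 0)) := by
  rw [← mem_vanishingToSecondOrder]
  exact ⟨on_lines_of_tricanF_mem, tricanF_mem_vanishingToSecondOrder⟩
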